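/- Let n ≥ 1 be an integer and p an odd prime with p ≡ 1 (mod n²) and p > n². Then for m = n·p we have d(m) = f(m) = n. -/
import Mathlib

/-- The Carmichael function: the exponent of the multiplicative group mod `m`. -/
noncomputable def carmichael (m : ℕ) : ℕ := Monoid.exponent (ZMod m)ˣ

/-- The radical of `m`: the product of the distinct primes dividing `m`. -/
def radN (m : ℕ) : ℕ := ∏ p ∈ m.primeFactors, p

/-- `δ(m) = 2` if `4 ∣ m`, else `1`. -/
def deltaN (m : ℕ) : ℕ := if 4 ∣ m then 2 else 1

/-- `d(m) = gcd(m, δ(m)·φ(rad m))`. -/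
def dFun (m : ℕ) : ℕ := Nat.gcd m (deltaN m * Nat.totient (radN m))

/-- `f(m) = gcd(m, δ(m)·λ(m)·φ(rad m)/φ(m))`. -/
noncomputable def fFun (m : ℕ) : ℕ :=
  Nat.gcd m (deltaN m * carmichael m * Nat.totient (radN m) / Nat.totient m)

lemma radN_dvd (n : ℕ) : radN n ∣ n := Nat.prod_primeFactors_dvd n

lemma radN_pos (n : ℕ) : 0 < radN n :=
  Finset.prod_pos fun _ hp => (Nat.prime_of_mem_primeFactors hp).pos

lemma totient_mul_radN (n : ℕ) : Nat.totient n * radN n = n * Nat.totient (radN n) := by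
  have h := Nat.totient_mul_prod_primeFactors (radN n)
  rw [show (radN n).primeFactors = n.primeFactors from
    Nat.primeFactors_prod fun p hp => Nat.prime_of_mem_primeFactors hp] at h
  have h2 : (radN n).totient * radN n = radN n * ∏ p ∈ n.primeFactors, (p - 1) := h
  have h3 : (radN n).totient = ∏ p ∈ n.primeFactors, (p - 1) := by
    have := radN_pos n
    exact Nat.eq_of_mul_eq_mul_right this (by rw [h2, mul_comm])
  rw [h3]
  exact Nat.totient_mul_prod_primeFactors n

lemma carmichael_eq_lcm (n p : ℕ) (hn : n ≠ 0) (hp : p.Prime) (hcop : Nat.Coprime n p) :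
    carmichael (n * p) = Nat.lcm (carmichael n) (p - 1) := by
  haveI : Fact p.Prime := ⟨hp⟩
  haveI : NeZero n := ⟨hn⟩
  have e : (ZMod (n * p))ˣ ≃* (ZMod n)ˣ × (ZMod p)ˣ :=
    (Units.mapEquiv (ZMod.chineseRemainder hcop).toMulEquiv).trans MulEquiv.prodUnits
  have h1 : carmichael (n * p) = Monoid.exponent ((ZMod n)ˣ × (ZMod p)ˣ) :=
    Monoid.exponent_eq_of_mulEquiv e
  rw [h1, Monoid.exponent_prod]
  congr 1
  rw [IsCyclic.exponent_eq_card, Nat.card_eq_fintype_card, ZMod.card_units_eq_totient,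
    Nat.totient_prime hp]

theorem pair_n_n (n p : ℕ) (hn : 1 ≤ n) (hp : p.Prime) (hpodd : Odd p)
    (hcong : p ≡ 1 [MOD n ^ 2]) (hgt : n ^ 2 < p) :
    dFun (n * p) = n ∧ fFun (n * p) = n := by
  have hn0 : n ≠ 0 := by omega
  have hnsq : n ≤ n ^ 2 := Nat.le_self_pow two_ne_zero n
  have hnp : n < p := lt_of_le_of_lt hnsq hgt
  have hp3 : 3 ≤ p := by
    rcases hpodd with ⟨k, hk⟩
    have := hp.two_le
    omega
  have hpn : ¬ p ∣ n := fun h => absurd (Nat.le_of_dvd (by omega) h) (by omega)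
  have hcop : Nat.Coprime n p := ((hp.coprime_iff_not_dvd).mpr hpn).symm
  have hn2p1 : n ^ 2 ∣ p - 1 := (Nat.modEq_iff_dvd' (by omega)).mp hcong.symm
  have hnp1 : n ∣ p - 1 := (dvd_pow_self n two_ne_zero).trans hn2p1
  have hp1pos : 0 < p - 1 := by omega
  have hm0 : n * p ≠ 0 := by positivity
  haveI : NeZero (n * p) := ⟨hm0⟩
  -- radical and totient computations
  have hradm : radN (n * p) = radN n * p := by
    unfold radN
    rw [Nat.primeFactors_mul hn0 hp.pos.ne', hp.primeFactors,
      Finset.prod_union (Finset.disjoint_singleton_right.mpr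
        (fun h => hpn (Nat.dvd_of_mem_primeFactors h))),
      Finset.prod_singleton]
  have hradcop : Nat.Coprime (radN n) p := Nat.Coprime.coprime_dvd_left (radN_dvd n) hcop
  have htotradm : (radN (n * p)).totient = (radN n).totient * (p - 1) := by
    rw [hradm, Nat.totient_mul hradcop, Nat.totient_prime hp]
  have htotm : (n * p).totient = n.totient * (p - 1) := by
    rw [Nat.totient_mul hcop, Nat.totient_prime hp]
  have hdeltam : deltaN (n * p) = deltaN n := by
    have hc4 : Nat.Coprime 4 p := by
      have h2 : Nat.Coprime 2 p := (Nat.coprime_two_left).mpr hpodd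
      exact (show Nat.Coprime (2 ^ 2) p from h2.pow_left 2)
    unfold deltaN
    congr 1
    simp only [eq_iff_iff]
    exact ⟨fun h => hc4.dvd_of_dvd_mul_right h, fun h => h.mul_right p⟩
  -- facts about p not dividing things
  have hdelta_le : deltaN n ≤ 2 := by unfold deltaN; split <;> omega
  have hdelta_pos : 0 < deltaN n := by unfold deltaN; split <;> omega
  have hpdelta : ¬ p ∣ deltaN n := fun h => absurd (Nat.le_of_dvd hdelta_pos h) (by omega)
  have hradle : radN n ≤ n := Nat.le_of_dvd (by omega) (radN_dvd n)
  have htotrad_pos : 0 < (radN n).totient := Nat.totient_pos.mpr (radN_pos n)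
  have htotrad_le : (radN n).totient ≤ n := le_trans (Nat.totient_le _) hradle
  have hptotrad : ¬ p ∣ (radN n).totient :=
    fun h => absurd (Nat.le_of_dvd htotrad_pos h) (by omega)
  have hpp1 : ¬ p ∣ p - 1 := fun h => absurd (Nat.le_of_dvd hp1pos h) (by omega)
  -- Carmichael facts
  have hlam : carmichael (n * p) = Nat.lcm (carmichael n) (p - 1) :=
    carmichael_eq_lcm n p hn0 hp hcop
  have hp1lam : (p - 1) ∣ carmichael (n * p) := hlam ▸ Nat.dvd_lcm_right _ _
  have hlamdvd : carmichael (n * p) ∣ (n * p).totient := by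
    have := Group.exponent_dvd_card (G := (ZMod (n * p))ˣ)
    rwa [ZMod.card_units_eq_totient] at this
  have hlampos : 0 < carmichael (n * p) :=
    Nat.pos_of_ne_zero Monoid.exponent_ne_zero_of_finite
  have hplam : ¬ p ∣ carmichael (n * p) := by
    intro h
    have h1 : p ∣ n.totient * (p - 1) := htotm ▸ h.trans hlamdvd
    rcases hp.dvd_mul.mp h1 with h2 | h2
    · have h3 : 0 < n.totient := Nat.totient_pos.mpr (by omega)
      have h4 := Nat.le_of_dvd h3 h2
      have h5 := Nat.totient_le n
      omega
    · exact hpp1 h2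
  -- the gcd argument
  have gcd_eq : ∀ X : ℕ, n ∣ X → ¬ p ∣ X → Nat.gcd (n * p) X = n := by
    intro X hnX hpX
    apply Nat.dvd_antisymm
    · have hpg : ¬ p ∣ Nat.gcd (n * p) X := fun h => hpX (h.trans (Nat.gcd_dvd_right _ _))
      have hcg : Nat.Coprime (Nat.gcd (n * p) X) p := ((hp.coprime_iff_not_dvd).mpr hpg).symm
      exact hcg.dvd_of_dvd_mul_right (Nat.gcd_dvd_left _ _)
    · exact Nat.dvd_gcd (dvd_mul_right n p) hnX
  constructor
  · -- d part
    unfold dFun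
    rw [hdeltam, htotradm]
    apply gcd_eq
    · exact Dvd.dvd.mul_left (hnp1.mul_left _) _
    · intro h
      rcases hp.dvd_mul.mp h with h1 | h1
      · exact hpdelta h1
      · rcases hp.dvd_mul.mp h1 with h2 | h2
        · exact hptotrad h2
        · exact hpp1 h2
  · -- f part
    unfold fFun
    rw [hdeltam, htotradm, htotm]
    have hre : deltaN n * carmichael (n * p) * ((radN n).totient * (p - 1)) =
        (deltaN n * carmichael (n * p) * (radN n).totient) * (p - 1) := by ring
    rw [hre, Nat.mul_div_mul_right _ _ hp1pos]
    set N := deltaN n * carmichael (n * p) * (radN n).totient with hN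
    have hkey : n * n.totient ∣ N := by
      have h1 : n * n.totient ∣ n ^ 2 * (radN n).totient :=
        ⟨radN n, by rw [pow_two, mul_assoc, ← totient_mul_radN]; ring⟩
      have h2 : n ^ 2 * (radN n).totient ∣ carmichael (n * p) * (radN n).totient :=
        mul_dvd_mul_right (hn2p1.trans hp1lam) _
      have h3 : carmichael (n * p) * (radN n).totient ∣ N := by
        rw [hN, mul_assoc]
        exact Dvd.dvd.mul_left dvd_rfl _
      exact h1.trans (h2.trans h3)
    have hφN : n.totient ∣ N := (dvd_mul_left _ n).trans hkey
    have hnQ : n ∣ N / n.totient := by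
      rw [Nat.dvd_div_iff_mul_dvd hφN, mul_comm]
      exact hkey
    have hQdvdN : N / n.totient ∣ N := ⟨n.totient, (Nat.div_mul_cancel hφN).symm⟩
    apply gcd_eq
    · exact hnQ
    · intro h
      have hpN : p ∣ N := h.trans hQdvdN
      rcases hp.dvd_mul.mp hpN with h1 | h1
      · rcases hp.dvd_mul.mp h1 with h2 | h2
        · exact hpdelta h2
        · exact hplam h2
      · exact hptotrad h1
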